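/- Let 0 < α ≤ β and let M := [α,β] × S² ⊂ ℝ × ℝ³. Then there exists a constant C > 0, independent of α and β, such that for all a, b ∈ M, the geodesic distance satisfies d_M(a,b) ≤ C‖a − b‖. -/

import Mathlib

open MeasureTheory

noncomputable section

abbrev E3 : Type := EuclideanSpace ℝ (Fin 3)

/-- `ℝ × ℝ³` endowed with the Euclidean (ℓ²) norm, i.e. `ℝ⁴`. -/
abbrev PR : Type := WithLp 2 (ℝ × E3)

/-- The lengths of Lipschitz paths with values in `M = [α,β] × S²` joining `a` to `b`. -/
def MPathLengths (α β : ℝ) (a b : PR) : Set ℝ :=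
  {L | ∃ γ : ℝ → PR, (∃ K : NNReal, LipschitzOnWith K γ (Set.Icc 0 1)) ∧
    (∀ t ∈ Set.Icc (0 : ℝ) 1, (γ t).ofLp.1 ∈ Set.Icc α β ∧ ‖(γ t).ofLp.2‖ = 1) ∧
    γ 0 = a ∧ γ 1 = b ∧
    L = ∫ t in Set.Ioo (0 : ℝ) 1, ‖deriv γ t‖}

/-- The geodesic distance on `M = [α,β] × S²`. -/
def dM (α β : ℝ) (a b : PR) : ℝ := sInf (MPathLengths α β a b)

/-!
Join `a = (r, u)` to `b = (s, v)` by the helix `t ↦ (r + t (s - r), c(t))`, where `c` runs along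
the great circle from `u` to `v` at angular speed `θ = ∠(u, v)`. The helix has constant speed
`√((s - r)² + θ²)`, and the chord `‖u - v‖ = 2 sin (θ / 2)` dominates `(2 / π) θ` by Jordan's
inequality, so `d_M(a, b) ≤ (π / 2) ‖a - b‖`.
-/

open Real RealInnerProductSpace InnerProductGeometry Module

section Sphere

variable {F : Type*} [NormedAddCommGroup F] [InnerProductSpace ℝ F]

lemma exists_norm_eq_one_inner_eq_zero [FiniteDimensional ℝ F] (hF : 2 ≤ finrank ℝ F) (u : F) :
    ∃ w : F, ‖w‖ = 1 ∧ ⟪u, w⟫ = 0 := by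
  have hspan : (ℝ ∙ u) ≠ ⊤ := by
    intro h
    have := finrank_span_le_card (R := ℝ) ({u} : Set F)
    rw [h, finrank_top, Set.toFinset_singleton, Finset.card_singleton] at this
    omega
  obtain ⟨w, hw, hw0⟩ :=
    Submodule.exists_mem_ne_zero_of_ne_bot (mt Submodule.orthogonal_eq_bot_iff.1 hspan)
  refine ⟨NormedSpace.normalize w, NormedSpace.norm_normalize_eq_one_iff.2 hw0, ?_⟩
  rw [NormedSpace.normalize, real_inner_smul_right,
    Submodule.mem_orthogonal_singleton_iff_inner_right.1 hw, mul_zero]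

lemma exists_norm_eq_one_inner_eq_zero_eq_norm_smul [FiniteDimensional ℝ F]
    (hF : 2 ≤ finrank ℝ F) {u p : F} (hp : ⟪u, p⟫ = 0) :
    ∃ w : F, ‖w‖ = 1 ∧ ⟪u, w⟫ = 0 ∧ p = ‖p‖ • w := by
  rcases eq_or_ne p 0 with rfl | hp0
  · obtain ⟨w, hw, huw⟩ := exists_norm_eq_one_inner_eq_zero hF u
    exact ⟨w, hw, huw, by rw [norm_zero, zero_smul]⟩
  · refine ⟨NormedSpace.normalize p, NormedSpace.norm_normalize_eq_one_iff.2 hp0, ?_,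
      (NormedSpace.norm_smul_normalize p).symm⟩
    rw [NormedSpace.normalize, real_inner_smul_right, hp, mul_zero]

lemma exists_eq_cos_angle_smul_add_sin_angle_smul [FiniteDimensional ℝ F]
    (hF : 2 ≤ finrank ℝ F) {u v : F} (hu : ‖u‖ = 1) (hv : ‖v‖ = 1) :
    ∃ w : F, ‖w‖ = 1 ∧ ⟪u, w⟫ = 0 ∧ v = cos (angle u v) • u + sin (angle u v) • w := by
  set θ := angle u v
  have hcos : cos θ = ⟪u, v⟫ := by simpa [hu, hv] using cos_angle_mul_norm_mul_norm u v
  set p := v - cos θ • u with hp_def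
  have hup : ⟪u, p⟫ = 0 := by
    rw [inner_sub_right, real_inner_smul_right, real_inner_self_eq_norm_sq, hu, hcos]
    ring
  have hp : ‖p‖ = sin θ := by
    rw [← sq_eq_sq₀ (norm_nonneg _) (sin_angle_nonneg u v), sin_sq, hp_def, norm_sub_sq_real,
      norm_smul, real_inner_smul_right, hu, hv, real_inner_comm, ← hcos, norm_eq_abs, mul_one,
      sq_abs]
    ring
  obtain ⟨w, hw, huw, hpw⟩ := exists_norm_eq_one_inner_eq_zero_eq_norm_smul hF hup
  exact ⟨w, hw, huw, by rw [← hp, ← hpw, hp_def, add_sub_cancel]⟩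

lemma angle_le_pi_div_two_mul_norm_sub {u v : F} (hu : ‖u‖ = 1) (hv : ‖v‖ = 1) :
    angle u v ≤ π / 2 * ‖u - v‖ := by
  set θ := angle u v
  have hθ₀ := angle_nonneg u v
  have hθπ := angle_le_pi u v
  have hsin : 0 ≤ sin (θ / 2) := sin_nonneg_of_nonneg_of_le_pi (by linarith) (by linarith)
  have hchord : ‖u - v‖ = 2 * sin (θ / 2) := by
    have hsq := norm_sub_sq_eq_norm_sq_add_norm_sq_sub_two_mul_norm_mul_norm_mul_cos_angle u v
    rw [hu, hv, show angle u v = 2 * (θ / 2) by ring, cos_two_mul] at hsq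
    rw [← sq_eq_sq₀ (norm_nonneg _) (by positivity)]
    nlinarith [sin_sq_add_cos_sq (θ / 2)]
  have hjordan := mul_le_sin (x := θ / 2) (by linarith) (by linarith)
  rw [hchord]
  field_simp at hjordan ⊢
  nlinarith [pi_pos]

def greatCircle (u w : F) (θ t : ℝ) : F := cos (θ * t) • u + sin (θ * t) • w

@[simp] lemma greatCircle_zero (u w : F) (θ : ℝ) : greatCircle u w θ 0 = u := by
  simp [greatCircle]

@[simp] lemma greatCircle_one (u w : F) (θ : ℝ) :
    greatCircle u w θ 1 = cos θ • u + sin θ • w := by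
  simp [greatCircle]

lemma hasDerivAt_greatCircle (u w : F) (θ t : ℝ) :
    HasDerivAt (greatCircle u w θ) (θ • greatCircle w (-u) θ t) t := by
  have hθt : HasDerivAt (fun s => θ * s) θ t := by simpa using (hasDerivAt_id t).const_mul θ
  convert (hθt.cos.smul_const u).add (hθt.sin.smul_const w) using 1
  · rfl
  · rw [greatCircle]
    module

lemma norm_greatCircle {u w : F} (hu : ‖u‖ = 1) (hw : ‖w‖ = 1) (huw : ⟪u, w⟫ = 0) (θ t : ℝ) :
    ‖greatCircle u w θ t‖ = 1 := by
  rw [← sq_eq_sq₀ (norm_nonneg _) zero_le_one, greatCircle, norm_add_sq_real, norm_smul,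
    norm_smul, real_inner_smul_left, real_inner_smul_right, huw, hu, hw, norm_eq_abs,
    norm_eq_abs, mul_one, mul_one, sq_abs, sq_abs]
  linear_combination sin_sq_add_cos_sq (θ * t)

lemma sqrt_sq_add_angle_sq_le {a b : WithLp 2 (ℝ × F)} (ha : ‖a.ofLp.2‖ = 1)
    (hb : ‖b.ofLp.2‖ = 1) :
    √((b.ofLp.1 - a.ofLp.1) ^ 2 + angle a.ofLp.2 b.ofLp.2 ^ 2) ≤ π / 2 * ‖a - b‖ := by
  have hθ := angle_le_pi_div_two_mul_norm_sub ha hb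
  have hθ₀ := angle_nonneg a.ofLp.2 b.ofLp.2
  have hab : ‖a - b‖ ^ 2 = (b.ofLp.1 - a.ofLp.1) ^ 2 + ‖a.ofLp.2 - b.ofLp.2‖ ^ 2 := by
    rw [WithLp.prod_norm_sq_eq_of_L2, WithLp.sub_fst, WithLp.sub_snd, norm_eq_abs, sq_abs,
      ← neg_sub, neg_sq]
    rfl
  have hπ : 1 ≤ (π / 2) ^ 2 := one_le_pow₀ (by linarith [pi_gt_three])
  rw [sqrt_le_left (by positivity), mul_pow, hab]
  calc (b.ofLp.1 - a.ofLp.1) ^ 2 + angle a.ofLp.2 b.ofLp.2 ^ 2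
      ≤ (π / 2) ^ 2 * (b.ofLp.1 - a.ofLp.1) ^ 2 + (π / 2 * ‖a.ofLp.2 - b.ofLp.2‖) ^ 2 :=
        add_le_add (le_mul_of_one_le_left (sq_nonneg _) hπ) (pow_le_pow_left₀ hθ₀ hθ 2)
    _ = _ := by ring

end Sphere

theorem HasDerivAt.toLp_prodMk {𝕜 E G : Type*} [NontriviallyNormedField 𝕜]
    [NormedAddCommGroup E] [NormedSpace 𝕜 E] [NormedAddCommGroup G] [NormedSpace 𝕜 G]
    (p : ENNReal) [Fact (1 ≤ p)] {f : 𝕜 → E} {g : 𝕜 → G} {f' : E} {g' : G} {t : 𝕜}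
    (hf : HasDerivAt f f' t) (hg : HasDerivAt g g' t) :
    HasDerivAt (fun s => WithLp.toLp p (f s, g s)) (WithLp.toLp p (f', g')) t :=
  (WithLp.prodContinuousLinearEquiv p 𝕜 E G).symm.hasFDerivAt.comp_hasDerivAt t (hf.prodMk hg)

lemma bddBelow_MPathLengths (α β : ℝ) (a b : PR) : BddBelow (MPathLengths α β a b) :=
  ⟨0, by
    rintro _ ⟨γ, -, -, -, -, rfl⟩
    exact setIntegral_nonneg measurableSet_Ioo fun _ _ => norm_nonneg _⟩

lemma dM_le_of_hasDerivAt {α β c : ℝ} {a b : PR} {γ γ' : ℝ → PR}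
    (hγ : ∀ t, HasDerivAt γ (γ' t) t) (hc : ∀ t, ‖γ' t‖ = c)
    (hM : ∀ t ∈ Set.Icc (0 : ℝ) 1, (γ t).ofLp.1 ∈ Set.Icc α β ∧ ‖(γ t).ofLp.2‖ = 1)
    (h0 : γ 0 = a) (h1 : γ 1 = b) : dM α β a b ≤ c := by
  have hderiv (t : ℝ) : ‖deriv γ t‖ = c := by rw [(hγ t).deriv, hc]
  refine csInf_le (bddBelow_MPathLengths α β a b) ⟨γ, ⟨‖γ' 0‖₊, ?_⟩, hM, h0, h1, ?_⟩
  · refine (lipschitzWith_of_nnnorm_deriv_le (fun t => (hγ t).differentiableAt)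
      fun t => ?_).lipschitzOnWith
    rw [← NNReal.coe_le_coe, coe_nnnorm, coe_nnnorm, hderiv, hc]
  · rw [setIntegral_congr_fun measurableSet_Ioo fun t _ => hderiv t]
    simp

lemma dM_le_sqrt_sq_add_angle_sq {α β : ℝ} {a b : PR}
    (ha : a.ofLp.1 ∈ Set.Icc α β ∧ ‖a.ofLp.2‖ = 1)
    (hb : b.ofLp.1 ∈ Set.Icc α β ∧ ‖b.ofLp.2‖ = 1) :
    dM α β a b ≤ √((b.ofLp.1 - a.ofLp.1) ^ 2 + angle a.ofLp.2 b.ofLp.2 ^ 2) := by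
  obtain ⟨w, hw, huw, hv⟩ := exists_eq_cos_angle_smul_add_sin_angle_smul (by simp) ha.2 hb.2
  set u := a.ofLp.2
  set θ := angle u b.ofLp.2
  set d := b.ofLp.1 - a.ofLp.1
  have hwu : ⟪w, -u⟫ = 0 := by rw [inner_neg_right, real_inner_comm, huw, neg_zero]
  refine dM_le_of_hasDerivAt
    (γ := fun t => WithLp.toLp 2 (a.ofLp.1 + t * d, greatCircle u w θ t))
    (γ' := fun t => WithLp.toLp 2 (d, θ • greatCircle w (-u) θ t))
    (fun t => ?_) (fun t => ?_) (fun t ht => ⟨?_, norm_greatCircle ha.2 hw huw θ t⟩) ?_ ?_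
  · exact HasDerivAt.toLp_prodMk 2
      (by simpa using ((hasDerivAt_id t).mul_const d).const_add a.ofLp.1)
      (hasDerivAt_greatCircle u w θ t)
  · rw [WithLp.prod_norm_eq_of_L2]
    simp only [WithLp.toLp_fst, WithLp.toLp_snd, norm_smul,
      norm_greatCircle hw (norm_neg u ▸ ha.2) hwu, mul_one, norm_eq_abs, sq_abs]
  · exact (convex_Icc α β).add_smul_sub_mem ha.1 hb.1 ht
  · rw [zero_mul, add_zero, greatCircle_zero]
  · rw [one_mul, add_sub_cancel, greatCircle_one, ← hv]

theorem stmt10 : ∃ C : ℝ, 0 < C ∧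
    ∀ α β : ℝ, 0 < α → α ≤ β →
    ∀ a b : PR, (a.ofLp.1 ∈ Set.Icc α β ∧ ‖a.ofLp.2‖ = 1) → (b.ofLp.1 ∈ Set.Icc α β ∧ ‖b.ofLp.2‖ = 1) →
      dM α β a b ≤ C * ‖a - b‖ := by
  refine ⟨π / 2, by positivity, fun α β _ _ a b ha hb => ?_⟩
  exact (dM_le_sqrt_sq_add_angle_sq ha hb).trans (sqrt_sq_add_angle_sq_le ha.2 hb.2)
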